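/- arXiv:1309.6798 — 2 statements merged into one kernel-verified Lean document; each statement's English description precedes it below -/
import Mathlib

section
/- Let f : [a,b] ⊆ [0,∞) → [0,∞) be continuous, 0 ≤ a < b, with f a P-function (i.e., f nonnegative and f(λx+(1-λ)y) ≤ f(x)+f(y) for all x,y ∈ [a,b], λ ∈ [0,1]), and p, q > 0. Then ∫_a^b (x-a)^p (b-x)^q f(x) f(a+b-x) dx ≤ (b-a)^{p+q+1} (f(a)+f(b))^2 B(p+1, q+1), where B is the Euler Beta function. -/
/-! A P-function on `[a, b]` is nonnegative (take `x = y`) and bounded by `f a + f b` (write `x` as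
a convex combination of the endpoints), so the integrand is at most `(f a + f b) ^ 2` times the Beta
weight `(x - a) ^ p * (b - x) ^ q`, whose integral the substitution `x = a + (b - a) t` turns into
`(b - a) ^ (p + q + 1) * B(p + 1, q + 1)`. -/

open MeasureTheory Set

noncomputable def eulerBeta (m n : ℝ) : ℝ := ∫ t in (0:ℝ)..1, t ^ (m - 1) * (1 - t) ^ (n - 1)

theorem add_sub_mem_Icc {α : Type*} [AddCommGroup α] [PartialOrder α] [IsOrderedAddMonoid α]
    {a b x : α} (hx : x ∈ Icc a b) : a + b - x ∈ Icc a b := by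
  rwa [sub_mem_Icc_iff_right, add_sub_cancel_right, add_sub_cancel_left]

def IsPFunction {E : Type*} [AddCommGroup E] [Module ℝ E] (f : E → ℝ) (s : Set E) : Prop :=
  ∀ x ∈ s, ∀ y ∈ s, ∀ lam : ℝ, 0 ≤ lam → lam ≤ 1 → f (lam • x + (1 - lam) • y) ≤ f x + f y

namespace IsPFunction

theorem nonneg {E : Type*} [AddCommGroup E] [Module ℝ E] {f : E → ℝ} {s : Set E}
    (hf : IsPFunction f s) {x : E} (hx : x ∈ s) : 0 ≤ f x := by
  have := hf x hx x hx 1 zero_le_one le_rfl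
  simp only [one_smul, sub_self, zero_smul, add_zero] at this
  linarith

theorem le_add_of_mem_Icc {f : ℝ → ℝ} {a b : ℝ} (hf : IsPFunction f (Icc a b)) (hab : a < b)
    {x : ℝ} (hx : x ∈ Icc a b) : f x ≤ f a + f b := by
  have hba : 0 < b - a := sub_pos.mpr hab
  have hcomb : ((b - x) / (b - a)) • a + (1 - (b - x) / (b - a)) • b = x := by
    simp only [smul_eq_mul]; field_simp; ring
  have := hf a (left_mem_Icc.mpr hab.le) b (right_mem_Icc.mpr hab.le) ((b - x) / (b - a))
    (div_nonneg (by linarith [hx.2]) hba.le) ((div_le_one hba).mpr (by linarith [hx.1]))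
  rwa [hcomb] at this

theorem mul_reflect_le_sq {f : ℝ → ℝ} {a b : ℝ} (hf : IsPFunction f (Icc a b)) (hab : a < b)
    {x : ℝ} (hx : x ∈ Icc a b) : f x * f (a + b - x) ≤ (f a + f b) ^ 2 := by
  rw [sq]
  exact mul_le_mul (hf.le_add_of_mem_Icc hab hx) (hf.le_add_of_mem_Icc hab (add_sub_mem_Icc hx))
    (hf.nonneg (add_sub_mem_Icc hx)) (hf.nonneg hx |>.trans (hf.le_add_of_mem_Icc hab hx))

end IsPFunction

theorem intervalIntegral.integral_mono_on_of_nonneg {f g : ℝ → ℝ} {a b : ℝ} (hab : a ≤ b)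
    (hg : IntervalIntegrable g volume a b) (hf : ∀ x ∈ Icc a b, 0 ≤ f x)
    (hfg : ∀ x ∈ Icc a b, f x ≤ g x) : ∫ x in a..b, f x ≤ ∫ x in a..b, g x := by
  rw [intervalIntegral.integral_of_le hab, intervalIntegral.integral_of_le hab]
  exact integral_mono_of_nonneg
    (ae_restrict_of_forall_mem measurableSet_Ioc fun x hx => hf x (Ioc_subset_Icc_self hx))
    hg.1 (ae_restrict_of_forall_mem measurableSet_Ioc fun x hx => hfg x (Ioc_subset_Icc_self hx))

theorem continuous_sub_rpow_mul_sub_rpow {a b p q : ℝ} (hp : 0 ≤ p) (hq : 0 ≤ q) :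
    Continuous fun x : ℝ => (x - a) ^ p * (b - x) ^ q :=
  ((continuous_id.sub continuous_const).rpow_const fun _ => Or.inr hp).mul
    ((continuous_const.sub continuous_id).rpow_const fun _ => Or.inr hq)

theorem integral_sub_rpow_mul_sub_rpow {a b : ℝ} (hab : a < b) (p q : ℝ) :
    ∫ x in a..b, (x - a) ^ p * (b - x) ^ q = (b - a) ^ (p + q + 1) * eulerBeta (p + 1) (q + 1) := by
  have hba : 0 < b - a := sub_pos.mpr hab
  have hsubst := intervalIntegral.integral_comp_mul_add (a := 0) (b := 1)
    (fun x => (x - a) ^ p * (b - x) ^ q) hba.ne' a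
  simp only [mul_zero, zero_add, mul_one, sub_add_cancel] at hsubst
  have hscale : ∫ t in (0:ℝ)..1, ((b - a) * t + a - a) ^ p * (b - ((b - a) * t + a)) ^ q
      = (b - a) ^ (p + q) * eulerBeta (p + 1) (q + 1) := by
    rw [eulerBeta, ← intervalIntegral.integral_const_mul]
    refine intervalIntegral.integral_congr fun t ht => ?_
    rw [uIcc_of_le zero_le_one] at ht
    have e1 : (b - a) * t + a - a = (b - a) * t := by ring
    have e2 : b - ((b - a) * t + a) = (b - a) * (1 - t) := by ring
    simp only [e1, e2, add_sub_cancel_right]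
    rw [Real.mul_rpow hba.le ht.1, Real.mul_rpow hba.le (sub_nonneg.mpr ht.2),
      Real.rpow_add hba]
    ring
  rw [hscale, smul_eq_mul, eq_inv_mul_iff_mul_eq₀ hba.ne'] at hsubst
  rw [← hsubst, Real.rpow_add_one hba.ne']
  ring

theorem thm_2_3_general (f : ℝ → ℝ) (a b : ℝ) (hab : a < b)
    (hP : ∀ x ∈ Icc a b, ∀ y ∈ Icc a b, ∀ lam : ℝ, 0 ≤ lam → lam ≤ 1 →
      f (lam * x + (1 - lam) * y) ≤ f x + f y)
    (p q : ℝ) (hp : 0 < p) (hq : 0 < q) :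
    ∫ x in a..b, (x - a) ^ p * (b - x) ^ q * (f x * f (a + b - x)) ≤
      (b - a) ^ (p + q + 1) * (f a + f b) ^ 2 * eulerBeta (p + 1) (q + 1) := by
  have hPf : IsPFunction f (Icc a b) := hP
  have hweight_nonneg : ∀ x ∈ Icc a b, 0 ≤ (x - a) ^ p * (b - x) ^ q := fun x hx =>
    mul_nonneg (Real.rpow_nonneg (sub_nonneg.mpr hx.1) _) (Real.rpow_nonneg (sub_nonneg.mpr hx.2) _)
  calc ∫ x in a..b, (x - a) ^ p * (b - x) ^ q * (f x * f (a + b - x))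
      ≤ ∫ x in a..b, (x - a) ^ p * (b - x) ^ q * (f a + f b) ^ 2 := by
        refine intervalIntegral.integral_mono_on_of_nonneg hab.le
          ((continuous_sub_rpow_mul_sub_rpow hp.le hq.le).mul continuous_const
            |>.intervalIntegrable a b) (fun x hx => ?_) (fun x hx => ?_)
        · exact mul_nonneg (hweight_nonneg x hx)
            (mul_nonneg (hPf.nonneg hx) (hPf.nonneg (add_sub_mem_Icc hx)))
        · exact mul_le_mul_of_nonneg_left (hPf.mul_reflect_le_sq hab hx) (hweight_nonneg x hx)
    _ = (b - a) ^ (p + q + 1) * (f a + f b) ^ 2 * eulerBeta (p + 1) (q + 1) := by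
        rw [intervalIntegral.integral_mul_const, integral_sub_rpow_mul_sub_rpow hab]
        ring

theorem thm_2_3 (f : ℝ → ℝ) (a b : ℝ) (ha : 0 ≤ a) (hab : a < b)
    (hf : ContinuousOn f (Icc a b)) (hnn : ∀ x ∈ Icc a b, 0 ≤ f x)
    (hP : ∀ x ∈ Icc a b, ∀ y ∈ Icc a b, ∀ lam : ℝ, 0 ≤ lam → lam ≤ 1 →
      f (lam * x + (1 - lam) * y) ≤ f x + f y)
    (p q : ℝ) (hp : 0 < p) (hq : 0 < q) :
    ∫ x in a..b, (x - a) ^ p * (b - x) ^ q * (f x * f (a + b - x)) ≤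
      (b - a) ^ (p + q + 1) * (f a + f b) ^ 2 * eulerBeta (p + 1) (q + 1) :=
  thm_2_3_general f a b hab hP p q hp hq
end

section
/- Let f : [a,b] ⊆ [0,∞) → [0,∞) be continuous and s-convex in the second sense for s ∈ (0,1], 0 ≤ a < b, p > 0. Then ∫_a^b (x-a)^p (b-x)^p f(x) f(a+b-x) dx ≤ ((b-a)^{2p+1}/2) { 2(f(a)^2+f(b)^2) B(p+1, 2s+p+1) + 4 f(a) f(b) B(p+s+1, p+s+1) }. -/
/-!
With t = (x - a)/(b - a), the points x and a + b - x are the convex combinations t b + (1 - t) a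
and (1 - t) b + t a, so s-convexity bounds f x and f (a + b - x) by
t^s f b + (1 - t)^s f a and (1 - t)^s f b + t^s f a. Their product is at most
((f a)² + (f b)²)/2 · (t^{2s} + (1 - t)^{2s}) + 2 f a f b · t^s (1 - t)^s, the gap being
((t^s - (1 - t)^s)(f a - f b))²/2. Multiplying by the weight (x - a)^p (b - x)^p, integrating and
substituting x = a + (b - a) t turns each term into a Beta integral.
-/

open MeasureTheory Set

def SConvexOn (s : ℝ) (D : Set ℝ) (f : ℝ → ℝ) : Prop :=
  ∀ ⦃u⦄, u ∈ D → ∀ ⦃v⦄, v ∈ D → ∀ ⦃α β : ℝ⦄, 0 ≤ α → 0 ≤ β → α + β = 1 →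
    f (α * u + β * v) ≤ α ^ s * f u + β ^ s * f v

theorem SConvexOn.subset {s : ℝ} {D E : Set ℝ} {f : ℝ → ℝ} (hf : SConvexOn s D f) (hED : E ⊆ D) :
    SConvexOn s E f :=
  fun _ hu _ hv _ _ hα hβ hαβ => hf (hED hu) (hED hv) hα hβ hαβ

noncomputable def sConvexProductBound (s x y t : ℝ) : ℝ :=
  (x ^ 2 + y ^ 2) / 2 * (t ^ (2 * s) + (1 - t) ^ (2 * s)) + 2 * x * y * (t ^ s * (1 - t) ^ s)

theorem SConvexOn.mul_apply_add_sub_le {s a b : ℝ} {f : ℝ → ℝ} (hf : SConvexOn s (Icc a b) f)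
    (hs : 0 ≤ s) (hf₀ : ∀ x ∈ Icc a b, 0 ≤ f x) (hab : a < b) {x : ℝ} (hx : x ∈ Icc a b) :
    f x * f (a + b - x) ≤ sConvexProductBound s (f a) (f b) ((x - a) / (b - a)) := by
  have hba : 0 < b - a := sub_pos.2 hab
  set t := (x - a) / (b - a)
  have ht₀ : 0 ≤ t := div_nonneg (by linarith [hx.1]) hba.le
  have ht₁ : 0 ≤ 1 - t := sub_nonneg.2 ((div_le_one hba).2 (by linarith [hx.2]))
  have hx_eq : x = t * b + (1 - t) * a := by
    simp only [t]; field_simp; ring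
  have hb : b ∈ Icc a b := right_mem_Icc.2 hab.le
  have ha : a ∈ Icc a b := left_mem_Icc.2 hab.le
  have h₁ : f x ≤ t ^ s * f b + (1 - t) ^ s * f a := by
    rw [hx_eq]; exact hf hb ha ht₀ ht₁ (by ring)
  have h₂ : f (a + b - x) ≤ (1 - t) ^ s * f b + t ^ s * f a := by
    rw [show a + b - x = (1 - t) * b + t * a by rw [hx_eq]; ring]
    exact hf hb ha ht₁ ht₀ (by ring)
  have hx' : a + b - x ∈ Icc a b := ⟨by linarith [hx.2], by linarith [hx.1]⟩
  have hsq : ∀ r : ℝ, 0 ≤ r → r ^ (2 * s) = r ^ s * r ^ s := fun r hr => by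
    rw [two_mul, Real.rpow_add_of_nonneg hr hs hs]
  calc f x * f (a + b - x)
      ≤ (t ^ s * f b + (1 - t) ^ s * f a) * ((1 - t) ^ s * f b + t ^ s * f a) :=
        mul_le_mul h₁ h₂ (hf₀ _ hx') ((hf₀ x hx).trans h₁)
    _ ≤ sConvexProductBound s (f a) (f b) t := by
        rw [sConvexProductBound, hsq t ht₀, hsq (1 - t) ht₁]
        nlinarith [sq_nonneg ((t ^ s - (1 - t) ^ s) * (f a - f b))]

theorem eulerBeta_comm (m n : ℝ) : eulerBeta m n = eulerBeta n m := by
  simpa [eulerBeta, mul_comm] using intervalIntegral.integral_comp_sub_left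
    (fun t : ℝ => t ^ (n - 1) * (1 - t) ^ (m - 1)) (a := 0) (b := 1) 1

theorem integral_rpow_mul_one_sub_rpow (m n : ℝ) :
    ∫ u in (0:ℝ)..1, u ^ m * (1 - u) ^ n = eulerBeta (m + 1) (n + 1) := by
  simp [eulerBeta]

theorem integral_rpow_mul_one_sub_rpow_mul_sConvexProductBound {s p : ℝ} (hs : 0 ≤ s)
    (hp : 0 ≤ p) (x y : ℝ) :
    ∫ u in (0:ℝ)..1, u ^ p * (1 - u) ^ p * sConvexProductBound s x y u =
      (x ^ 2 + y ^ 2) * eulerBeta (p + 1) (2 * s + p + 1) +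
        2 * x * y * eulerBeta (p + s + 1) (p + s + 1) := by
  have h2s : 0 ≤ 2 * s := by positivity
  have hint : ∀ {m n : ℝ}, 0 ≤ m → 0 ≤ n →
      IntervalIntegrable (fun u : ℝ => u ^ m * (1 - u) ^ n) volume 0 1 :=
    fun hm hn => Continuous.intervalIntegrable (by fun_prop (disch := assumption)) _ _
  have hsplit : EqOn (fun u : ℝ => u ^ p * (1 - u) ^ p * sConvexProductBound s x y u)
      (fun u => (x ^ 2 + y ^ 2) / 2 * (u ^ (2 * s + p) * (1 - u) ^ p)
        + (x ^ 2 + y ^ 2) / 2 * (u ^ p * (1 - u) ^ (2 * s + p))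
        + 2 * x * y * (u ^ (p + s) * (1 - u) ^ (p + s))) (uIcc 0 1) := by
    intro u hu
    rw [uIcc_of_le zero_le_one] at hu
    have hu₁ : 0 ≤ 1 - u := sub_nonneg.2 hu.2
    simp only [sConvexProductBound, Real.rpow_add_of_nonneg hu.1 h2s hp,
      Real.rpow_add_of_nonneg hu₁ h2s hp, Real.rpow_add_of_nonneg hu.1 hp hs,
      Real.rpow_add_of_nonneg hu₁ hp hs]
    ring
  rw [intervalIntegral.integral_congr hsplit,
    intervalIntegral.integral_add (((hint (by positivity) hp).const_mul _).add
      ((hint hp (by positivity)).const_mul _)) ((hint (by positivity) (by positivity)).const_mul _),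
    intervalIntegral.integral_add ((hint (by positivity) hp).const_mul _)
      ((hint hp (by positivity)).const_mul _)]
  simp only [intervalIntegral.integral_const_mul, integral_rpow_mul_one_sub_rpow]
  rw [eulerBeta_comm (2 * s + p + 1)]
  ring

theorem integral_sub_rpow_mul_rpow_sub_mul_comp_div (g : ℝ → ℝ) {a b : ℝ} (hab : a < b) (p : ℝ) :
    ∫ x in a..b, (x - a) ^ p * (b - x) ^ p * g ((x - a) / (b - a)) =
      (b - a) ^ (2 * p + 1) * ∫ u in (0:ℝ)..1, u ^ p * (1 - u) ^ p * g u := by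
  have hba : 0 < b - a := sub_pos.2 hab
  set G : ℝ → ℝ := fun u => u ^ p * (1 - u) ^ p * g u
  have hrescale : EqOn (fun x => (x - a) ^ p * (b - x) ^ p * g ((x - a) / (b - a)))
      (fun x => (b - a) ^ (2 * p) * G (x / (b - a) - a / (b - a))) (uIcc a b) := by
    intro x hx
    rw [uIcc_of_le hab.le] at hx
    simp only [G, ← sub_div]
    set u := (x - a) / (b - a)
    have hu₀ : 0 ≤ u := div_nonneg (by linarith [hx.1]) hba.le
    have hu₁ : 0 ≤ 1 - u := sub_nonneg.2 ((div_le_one hba).2 (by linarith [hx.2]))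
    have hxa : x - a = (b - a) * u := by simp only [u]; field_simp
    have hbx : b - x = (b - a) * (1 - u) := by simp only [u]; field_simp; ring
    rw [hxa, hbx, Real.mul_rpow hba.le hu₀, Real.mul_rpow hba.le hu₁, two_mul,
      Real.rpow_add hba]
    ring
  rw [intervalIntegral.integral_congr hrescale, intervalIntegral.integral_const_mul,
    intervalIntegral.integral_comp_div_sub G hba.ne', sub_self, ← sub_div, div_self hba.ne',
    smul_eq_mul, Real.rpow_add hba, Real.rpow_one]
  ring

theorem intervalIntegral.integral_mono_of_nonneg_on {f g : ℝ → ℝ} {a b : ℝ} (hab : a ≤ b)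
    (hf : ∀ x ∈ Icc a b, 0 ≤ f x) (hg : IntervalIntegrable g volume a b)
    (hfg : ∀ x ∈ Icc a b, f x ≤ g x) : ∫ x in a..b, f x ≤ ∫ x in a..b, g x := by
  rw [intervalIntegral.integral_of_le hab, intervalIntegral.integral_of_le hab]
  exact integral_mono_of_nonneg
    (ae_restrict_of_forall_mem measurableSet_Ioc fun x hx => hf x (Ioc_subset_Icc_self hx)) hg.1
    (ae_restrict_of_forall_mem measurableSet_Ioc fun x hx => hfg x (Ioc_subset_Icc_self hx))

theorem cor_2_1_general (f : ℝ → ℝ) (a b : ℝ) (ha : 0 ≤ a) (hab : a < b)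
    (hnn : ∀ x ∈ Icc a b, 0 ≤ f x) (s : ℝ) (hs0 : 0 < s)
    (hsc : ∀ u v : ℝ, 0 ≤ u → 0 ≤ v → ∀ α β : ℝ, 0 ≤ α → 0 ≤ β → α + β = 1 →
      f (α * u + β * v) ≤ α ^ s * f u + β ^ s * f v)
    (p : ℝ) (hp : 0 < p) :
    ∫ x in a..b, (x - a) ^ p * (b - x) ^ p * (f x * f (a + b - x)) ≤
      (b - a) ^ (2 * p + 1) / 2 *
        (2 * (f a ^ 2 + f b ^ 2) * eulerBeta (p + 1) (2 * s + p + 1) +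
          4 * f a * f b * eulerBeta (p + s + 1) (p + s + 1)) := by
  have hf : SConvexOn s (Icc a b) f :=
    SConvexOn.subset (D := Ici 0) (fun u hu v hv α β => hsc u v hu hv α β)
      fun x hx => ha.trans hx.1
  have hweight : ∀ x ∈ Icc a b, 0 ≤ (x - a) ^ p * (b - x) ^ p := fun x hx =>
    mul_nonneg (Real.rpow_nonneg (sub_nonneg.2 hx.1) p) (Real.rpow_nonneg (sub_nonneg.2 hx.2) p)
  have hbound_cont : Continuous fun x =>
      (x - a) ^ p * (b - x) ^ p * sConvexProductBound s (f a) (f b) ((x - a) / (b - a)) := by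
    unfold sConvexProductBound
    fun_prop (disch := positivity)
  calc ∫ x in a..b, (x - a) ^ p * (b - x) ^ p * (f x * f (a + b - x))
      ≤ ∫ x in a..b, (x - a) ^ p * (b - x) ^ p *
          sConvexProductBound s (f a) (f b) ((x - a) / (b - a)) :=
        intervalIntegral.integral_mono_of_nonneg_on hab.le
          (fun x hx => mul_nonneg (hweight x hx) (mul_nonneg (hnn x hx)
            (hnn _ ⟨by linarith [hx.2], by linarith [hx.1]⟩)))
          (hbound_cont.intervalIntegrable a b)
          (fun x hx => mul_le_mul_of_nonneg_left
            (hf.mul_apply_add_sub_le hs0.le hnn hab hx) (hweight x hx))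
    _ = _ := by
      rw [integral_sub_rpow_mul_rpow_sub_mul_comp_div _ hab,
        integral_rpow_mul_one_sub_rpow_mul_sConvexProductBound hs0.le hp.le]
      ring

theorem cor_2_1 (f : ℝ → ℝ) (a b : ℝ) (ha : 0 ≤ a) (hab : a < b)
    (hf : ContinuousOn f (Icc a b)) (hnn : ∀ x ∈ Icc a b, 0 ≤ f x) (s : ℝ) (hs0 : 0 < s) (hs1 : s ≤ 1)
    (hsc : ∀ u v : ℝ, 0 ≤ u → 0 ≤ v → ∀ α β : ℝ, 0 ≤ α → 0 ≤ β → α + β = 1 →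
      f (α * u + β * v) ≤ α ^ s * f u + β ^ s * f v)
    (p : ℝ) (hp : 0 < p) :
    ∫ x in a..b, (x - a) ^ p * (b - x) ^ p * (f x * f (a + b - x)) ≤
      (b - a) ^ (2 * p + 1) / 2 *
        (2 * (f a ^ 2 + f b ^ 2) * eulerBeta (p + 1) (2 * s + p + 1) +
          4 * f a * f b * eulerBeta (p + s + 1) (p + s + 1)) :=
  cor_2_1_general f a b ha hab hnn s hs0 hsc p hp
end
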